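/- arXiv:2110.06426 — 2 statements merged into one kernel-verified Lean document; each statement's English description precedes it below -/
import Mathlib

section
/- Let m ≥ 2 be a fixed integer and let f be a probability density on (0,1) satisfying 0 < c_f ≤ f(t) ≤ C_f for all t ∈ (0,1). For each n ≥ 1 let (t_{i,j}), i = 1,…,n, j = 1,…,m, be i.i.d. random variables with density f, and for h > 0 let Ñ_h = #{(i,j) : 1 ≤ i ≤ n, 1 ≤ j ≤ m−1, t_{i,(j+1)} − t_{i,(j)} < h}. Then there exist constants 0 < c₁ ≤ c₂ < ∞ and h₀ > 0, depending only on m, c_f, C_f, such that c₁·n·h ≤ E[Ñ_h] ≤ c₂·n·h for every n ≥ 1 and every h ∈ (0, h₀]. -/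
open MeasureTheory ProbabilityTheory Filter

/-- The `j`-th order statistic (0-indexed) of the tuple `v`. -/
noncomputable def sortedVal {m : ℕ} (v : Fin m → ℝ) (j : ℕ) : ℝ :=
  if h : j < m then v (Tuple.sort v ⟨j, h⟩) else 0

/-- `Ñ_h`: the number of pairs `(i, j)`, `1 ≤ i ≤ n`, `1 ≤ j ≤ m - 1`, such that the
consecutive order-statistic spacing `t_{i,(j+1)} - t_{i,(j)}` is smaller than `h`. -/
noncomputable def spacingCount (n m : ℕ) (T : Fin n → Fin m → ℝ) (h : ℝ) : ℝ :=
  ∑ i : Fin n, ∑ j ∈ Finset.range (m - 1),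
    if sortedVal (fun k => T i k) (j + 1) - sortedVal (fun k => T i k) j < h then (1 : ℝ) else 0

/-!
Within one individual, two samples closer than `h` force some consecutive spacing below `h`
(their sorted positions `p < q` give `t_(p+1) - t_(p) ≤ t_(q) - t_(p) < h`), and every spacing
below `h` is the gap between two distinct samples that are neighbours in sorted order. Hence
`1{|t₁ - t₂| < h} ≤ #{small spacings} ≤ #{(a, b) : a ≠ b, |t_a - t_b| < h}`, and taking
expectations gives `n p ≤ E[Ñ_h] ≤ n m (m - 1) p` with `p = P(|X - Y| < h)` for independent
`X, Y` of density `f`. Writing `p = ∫ μ(x - h, x + h) dμ(x)`, the density bounds give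
`p ≤ 2 C_f h`, and for `h ≤ 1/2` restricting to `x ∈ (0, 1/2)` gives `p ≥ c_f² h / 2`.
-/

section OrderStatistics

open Finset

variable {m : ℕ} (v : Fin m → ℝ)

lemma sortedVal_of_lt {j : ℕ} (hj : j < m) : sortedVal v j = v (Tuple.sort v ⟨j, hj⟩) :=
  dif_pos hj

lemma sortedVal_sort_symm (k : Fin m) : sortedVal v ((Tuple.sort v).symm k) = v k := by
  simp [sortedVal_of_lt v ((Tuple.sort v).symm k).isLt]

lemma sortedVal_mono {j k : ℕ} (hjk : j ≤ k) (hk : k < m) : sortedVal v j ≤ sortedVal v k := by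
  rw [sortedVal_of_lt v (hjk.trans_lt hk), sortedVal_of_lt v hk]
  exact Tuple.monotone_sort v (Fin.mk_le_mk.2 hjk)

lemma sortedVal_le_iff {j : ℕ} (hj : j < m) (t : ℝ) :
    sortedVal v j ≤ t ↔ ∃ s : Finset (Fin m), #s = j + 1 ∧ ∀ k ∈ s, v k ≤ t := by
  rw [sortedVal_of_lt v hj]
  constructor
  · intro ht
    refine ⟨(Iic (⟨j, hj⟩ : Fin m)).map (Tuple.sort v).toEmbedding, by simp, ?_⟩
    intro k hk
    rw [mem_map_equiv, mem_Iic] at hk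
    simpa using (Tuple.monotone_sort v hk).trans ht
  · rintro ⟨s, hcard, hs⟩
    -- `s` has `j + 1` elements, so one of them sits at a sorted position `≥ j`
    obtain ⟨k, hks, hjk⟩ : ∃ k ∈ s, (⟨j, hj⟩ : Fin m) ≤ (Tuple.sort v).symm k := by
      by_contra! hlt
      have hsub : s.map (Tuple.sort v).symm.toEmbedding ⊆ Iio ⟨j, hj⟩ := by
        intro k hk
        obtain ⟨k, hks, rfl⟩ := mem_map.1 hk
        exact mem_Iio.2 (hlt k hks)
      simpa [hcard] using card_le_card hsub
    exact (Tuple.monotone_sort v hjk).trans (by simpa using hs k hks)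

lemma measurable_sortedVal (j : ℕ) : Measurable fun v : Fin m → ℝ => sortedVal v j := by
  by_cases hj : j < m
  · refine measurable_of_Iic fun t => ?_
    have : (fun v : Fin m → ℝ => sortedVal v j) ⁻¹' Set.Iic t
        = ⋃ s : Finset (Fin m), ⋃ (_ : #s = j + 1), ⋂ k ∈ s, {v | v k ≤ t} := by
      ext v
      simp [sortedVal_le_iff v hj]
    rw [this]
    exact .iUnion fun s => .iUnion fun _ => .biInter s.countable_toSet fun k _ =>
      measurableSet_le (measurable_pi_apply k) measurable_const
  · simp only [sortedVal, dif_neg hj, measurable_const]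

lemma exists_spacing_lt_of_abs_sub_lt {a b : Fin m} (hab : a ≠ b) {h : ℝ}
    (hv : |v a - v b| < h) :
    ∃ j ∈ range (m - 1), sortedVal v (j + 1) - sortedVal v j < h := by
  set σ := Tuple.sort v
  wlog hlt : σ.symm a < σ.symm b generalizing a b
  · exact this hab.symm (by rwa [abs_sub_comm])
      ((lt_or_gt_of_ne (σ.symm.injective.ne hab)).resolve_left hlt)
  have hb := (σ.symm b).isLt
  refine ⟨σ.symm a, mem_range.2 (by omega), ?_⟩
  calc sortedVal v (σ.symm a + 1) - sortedVal v (σ.symm a)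
      ≤ sortedVal v (σ.symm b) - sortedVal v (σ.symm a) := by
        gcongr
        exact sortedVal_mono v hlt hb
    _ = v b - v a := by rw [sortedVal_sort_symm, sortedVal_sort_symm]
    _ ≤ |v a - v b| := by rw [abs_sub_comm]; exact le_abs_self _
    _ < h := hv

lemma card_spacing_lt_le_card_offDiag (h : ℝ) :
    #{j ∈ range (m - 1) | sortedVal v (j + 1) - sortedVal v j < h}
      ≤ #{p ∈ (univ : Finset (Fin m)).offDiag | |v p.1 - v p.2| < h} := by
  rcases eq_or_ne m 0 with rfl | hm
  · simp
  have : NeZero m := ⟨hm⟩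
  set σ := Tuple.sort v
  have hval : ∀ j < m, (Fin.ofNat m j : ℕ) = j := fun j hj => by simp [Nat.mod_eq_of_lt hj]
  have hσ : ∀ j < m, sortedVal v j = v (σ (Fin.ofNat m j)) := fun j hj => by
    rw [sortedVal_of_lt v hj, show (⟨j, hj⟩ : Fin m) = Fin.ofNat m j from Fin.ext (hval j hj).symm]
  refine card_le_card_of_injOn (fun j => (σ (Fin.ofNat m j), σ (Fin.ofNat m (j + 1)))) ?_ ?_
  · intro j hj
    simp only [coe_filter, mem_range, Set.mem_ofPred_eq] at hj
    obtain ⟨hjm, hlt⟩ := hj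
    have hmono := sortedVal_mono v (Nat.le_succ j) (by omega)
    rw [hσ j (by omega), hσ (j + 1) (by omega)] at hmono hlt
    refine mem_filter.2 ⟨mem_offDiag.2 ⟨mem_univ _, mem_univ _, σ.injective.ne ?_⟩, ?_⟩
    · rw [Ne, Fin.ext_iff, hval j (by omega), hval (j + 1) (by omega)]
      omega
    · rwa [abs_sub_comm, abs_of_nonneg (sub_nonneg.2 hmono)]
  · intro j hj k hk hjk
    simp only [coe_filter, mem_range, Set.mem_ofPred_eq] at hj hk
    have := congrArg Fin.val (σ.injective (congrArg Prod.fst hjk))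
    rwa [hval j (by omega), hval k (by omega)] at this

end OrderStatistics

section Density

variable {α : Type*} [MeasurableSpace α] {μ : Measure α} {f : α → ℝ}

lemma withDensity_ofReal_le_smul {C : ℝ} (hf : ∀ x, f x ≤ C) :
    μ.withDensity (fun x => ENNReal.ofReal (f x)) ≤ ENNReal.ofReal C • μ := by
  rw [← withDensity_const]
  exact withDensity_mono (ae_of_all _ fun x => ENNReal.ofReal_le_ofReal (hf x))

lemma smul_restrict_le_withDensity_ofReal {s : Set α} (hs : MeasurableSet s) {c : ℝ}
    (hf : ∀ x ∈ s, c ≤ f x) :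
    ENNReal.ofReal c • μ.restrict s ≤ μ.withDensity (fun x => ENNReal.ofReal (f x)) := by
  rw [← withDensity_const, ← withDensity_indicator hs]
  refine withDensity_mono (ae_of_all _ fun x => ?_)
  by_cases hx : x ∈ s
  · simpa [Set.indicator_of_mem hx] using ENNReal.ofReal_le_ofReal (hf x hx)
  · simp [Set.indicator_of_notMem hx]

end Density

section DiagonalStrip

open Set
open scoped ENNReal

def diagStrip (h : ℝ) : Set (ℝ × ℝ) := {p | |p.1 - p.2| < h}

lemma measurableSet_diagStrip (h : ℝ) : MeasurableSet (diagStrip h) :=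
  measurableSet_lt (measurable_fst.sub measurable_snd).abs measurable_const

lemma prod_apply_diagStrip {ν μ : Measure ℝ} [SFinite μ] (h : ℝ) :
    ν.prod μ (diagStrip h) = ∫⁻ x, μ (Ioo (x - h) (x + h)) ∂ν := by
  rw [Measure.prod_apply (measurableSet_diagStrip h)]
  congr! with x
  ext y
  simp only [diagStrip, mem_preimage, Set.mem_ofPred_eq, mem_Ioo, abs_lt]
  constructor <;> rintro ⟨h₁, h₂⟩ <;> constructor <;> linarith

lemma prod_diagStrip_le {ν μ : Measure ℝ} [IsProbabilityMeasure ν] [SFinite μ] {K : ℝ≥0∞}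
    (hμ : μ ≤ K • volume) (h : ℝ) :
    ν.prod μ (diagStrip h) ≤ K * ENNReal.ofReal (2 * h) := by
  rw [prod_apply_diagStrip]
  calc ∫⁻ x, μ (Ioo (x - h) (x + h)) ∂ν ≤ ∫⁻ _, K * ENNReal.ofReal (2 * h) ∂ν := by
        refine lintegral_mono fun x => (hμ _).trans_eq ?_
        rw [Measure.smul_apply, Real.volume_Ioo, smul_eq_mul]
        ring_nf
    _ = K * ENNReal.ofReal (2 * h) := by simp

lemma le_prod_diagStrip {μ : Measure ℝ} [SFinite μ] {K : ℝ≥0∞}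
    (hμ : K • volume.restrict (Ioo 0 1) ≤ μ) {h : ℝ} (h₀ : 0 ≤ h) (h₁ : h ≤ 1 / 2) :
    K * ENNReal.ofReal h * (K * ENNReal.ofReal (1 / 2)) ≤ μ.prod μ (diagStrip h) := by
  have hμI : ∀ a b, 0 ≤ a → b ≤ 1 → K * ENNReal.ofReal (b - a) ≤ μ (Ioo a b) := by
    intro a b ha hb
    refine Eq.trans_le ?_ (hμ _)
    rw [Measure.smul_apply, Measure.restrict_apply measurableSet_Ioo,
      inter_eq_left.2 (Ioo_subset_Ioo ha hb), Real.volume_Ioo, smul_eq_mul]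
  have hslice : (Ioo 0 (1 / 2)).indicator (fun _ => K * ENNReal.ofReal h)
      ≤ fun x => μ (Ioo (x - h) (x + h)) := by
    intro x
    by_cases hx : x ∈ Ioo (0 : ℝ) (1 / 2)
    · rw [indicator_of_mem hx]
      calc K * ENNReal.ofReal h = K * ENNReal.ofReal (x + h - x) := by ring_nf
        _ ≤ μ (Ioo x (x + h)) := hμI _ _ hx.1.le (by linarith [hx.2])
        _ ≤ μ (Ioo (x - h) (x + h)) := measure_mono (Ioo_subset_Ioo (by linarith) le_rfl)
    · rw [indicator_of_notMem hx]
      exact zero_le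
  calc K * ENNReal.ofReal h * (K * ENNReal.ofReal (1 / 2))
      ≤ K * ENNReal.ofReal h * μ (Ioo 0 (1 / 2)) := by
        gcongr
        simpa using hμI 0 (1 / 2) le_rfl (by norm_num)
    _ = ∫⁻ x, (Ioo 0 (1 / 2)).indicator (fun _ => K * ENNReal.ofReal h) x ∂μ := by
        rw [lintegral_indicator measurableSet_Ioo, setLIntegral_const]
    _ ≤ μ.prod μ (diagStrip h) := by
        rw [prod_apply_diagStrip]
        exact lintegral_mono hslice

variable {f : ℝ → ℝ} {h : ℝ}

lemma measureReal_withDensity_prod_diagStrip_le [IsProbabilityMeasure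
    (volume.withDensity fun x => ENNReal.ofReal (f x))] {C : ℝ} (hC : 0 ≤ C) (hf : ∀ x, f x ≤ C)
    (h₀ : 0 ≤ h) :
    ((volume.withDensity fun x => ENNReal.ofReal (f x)).prod
      (volume.withDensity fun x => ENNReal.ofReal (f x))).real (diagStrip h) ≤ 2 * C * h := by
  refine ENNReal.toReal_le_of_le_ofReal (by positivity) ?_
  refine (prod_diagStrip_le (withDensity_ofReal_le_smul hf) h).trans_eq ?_
  rw [← ENNReal.ofReal_mul hC, mul_left_comm, mul_assoc]

lemma le_measureReal_withDensity_prod_diagStrip [IsFiniteMeasure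
    (volume.withDensity fun x => ENNReal.ofReal (f x))] {c : ℝ} (hc : 0 ≤ c)
    (hf : ∀ x ∈ Ioo 0 1, c ≤ f x) (h₀ : 0 ≤ h) (h₁ : h ≤ 1 / 2) :
    c ^ 2 / 2 * h ≤ ((volume.withDensity fun x => ENNReal.ofReal (f x)).prod
      (volume.withDensity fun x => ENNReal.ofReal (f x))).real (diagStrip h) := by
  have := le_prod_diagStrip (smul_restrict_le_withDensity_ofReal measurableSet_Ioo hf) h₀ h₁
  rw [← ENNReal.ofReal_mul hc, ← ENNReal.ofReal_mul hc, ← ENNReal.ofReal_mul (by positivity),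
    ENNReal.ofReal_le_iff_le_toReal (measure_ne_top _ _)] at this
  exact (by ring : c ^ 2 / 2 * h = c * h * (c * (1 / 2))).trans_le this

end DiagonalStrip

lemma ProbabilityTheory.IndepFun.measureReal_abs_sub_lt {Ω : Type*} [MeasurableSpace Ω]
    {P : Measure Ω} [IsFiniteMeasure P] {μ : Measure ℝ} {X Y : Ω → ℝ} (hXY : IndepFun X Y P)
    (hX : Measurable X) (hY : Measurable Y) (hXμ : P.map X = μ) (hYμ : P.map Y = μ) (h : ℝ) :
    P.real {ω | |X ω - Y ω| < h} = (μ.prod μ).real (diagStrip h) := by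
  have hmap := (indepFun_iff_map_prod_eq_prod_map_map hX.aemeasurable hY.aemeasurable).1 hXY
  rw [hXμ, hYμ] at hmap
  rw [← hmap, map_measureReal_apply (hX.prodMk hY) (measurableSet_diagStrip h)]
  rfl

open Finset in
lemma spacingCount_eq_sum_card {n m : ℕ} (t : Fin n → Fin m → ℝ) (h : ℝ) :
    spacingCount n m t h
      = ∑ i, (#{j ∈ range (m - 1) | sortedVal (t i) (j + 1) - sortedVal (t i) j < h} : ℝ) := by
  simp [spacingCount]

section Expectation

open Finset

variable {Ω : Type*} [MeasurableSpace Ω] {P : Measure Ω} [IsFiniteMeasure P] {n m : ℕ}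
  {T : Fin n → Fin m → Ω → ℝ} {h : ℝ}

lemma integrable_spacingCount (hT : ∀ i k, Measurable (T i k)) :
    Integrable (fun ω => spacingCount n m (fun i k => T i k ω) h) P := by
  refine integrable_finsetSum _ fun i _ => integrable_finsetSum _ fun j _ => ?_
  have hTi : Measurable fun ω k => T i k ω := measurable_pi_lambda _ (hT i)
  refine .of_bound (Measurable.ite ?_ measurable_const measurable_const).aestronglyMeasurable 1
    (ae_of_all _ fun ω => by split_ifs <;> simp)
  exact measurableSet_lt (((measurable_sortedVal _).comp hTi).sub
    ((measurable_sortedVal _).comp hTi)) measurable_const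

lemma measurableSet_abs_sub_lt (hT : ∀ i k, Measurable (T i k)) (i : Fin n) (a b : Fin m) :
    MeasurableSet {ω | |T i a ω - T i b ω| < h} :=
  measurableSet_lt ((hT i a).sub (hT i b)).abs measurable_const

lemma mul_le_integral_spacingCount (hT : ∀ i k, Measurable (T i k)) {a b : Fin m} (hab : a ≠ b)
    {p : ℝ} (hp : ∀ i, p ≤ P.real {ω | |T i a ω - T i b ω| < h}) :
    n * p ≤ ∫ ω, spacingCount n m (fun i k => T i k ω) h ∂P := by
  set E : Fin n → Set Ω := fun i => {ω | |T i a ω - T i b ω| < h}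
  have hE : ∀ i, MeasurableSet (E i) := fun i => measurableSet_abs_sub_lt hT i a b
  have hcount : ∀ ω, ∑ i, (E i).indicator 1 ω ≤ spacingCount n m (fun i k => T i k ω) h := by
    intro ω
    rw [spacingCount_eq_sum_card]
    refine sum_le_sum fun i _ => ?_
    by_cases hω : ω ∈ E i
    · obtain ⟨j, hj, hlt⟩ := exists_spacing_lt_of_abs_sub_lt (fun k => T i k ω) hab hω
      rw [Set.indicator_of_mem hω, Pi.one_apply, Nat.one_le_cast, one_le_card]
      exact ⟨j, mem_filter.2 ⟨hj, hlt⟩⟩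
    · rw [Set.indicator_of_notMem hω]
      positivity
  calc n * p ≤ ∑ i, P.real (E i) := by
        simpa using sum_le_sum fun i (_ : i ∈ univ) => hp i
    _ = ∫ ω, ∑ i, (E i).indicator 1 ω ∂P := by
        rw [integral_finsetSum _ fun i _ => (integrable_const 1).indicator (hE i)]
        simp only [integral_indicator_one (hE _)]
    _ ≤ ∫ ω, spacingCount n m (fun i k => T i k ω) h ∂P :=
        integral_mono (integrable_finsetSum _ fun i _ => (integrable_const 1).indicator (hE i))
          (integrable_spacingCount hT) hcount

lemma integral_spacingCount_le (hT : ∀ i k, Measurable (T i k)) {p : ℝ}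
    (hp : ∀ i a b, a ≠ b → P.real {ω | |T i a ω - T i b ω| < h} ≤ p) :
    ∫ ω, spacingCount n m (fun i k => T i k ω) h ∂P ≤ n * (m * (m - 1)) * p := by
  set E : Fin n → Fin m × Fin m → Set Ω := fun i q => {ω | |T i q.1 ω - T i q.2 ω| < h}
  have hE : ∀ i q, MeasurableSet (E i q) := fun i q => measurableSet_abs_sub_lt hT i q.1 q.2
  have hcount : ∀ ω, spacingCount n m (fun i k => T i k ω) h
      ≤ ∑ i, ∑ q ∈ univ.offDiag, (E i q).indicator 1 ω := by
    intro ω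
    rw [spacingCount_eq_sum_card]
    refine sum_le_sum fun i _ => ?_
    simpa [E, Set.indicator_apply] using card_spacing_lt_le_card_offDiag (fun k => T i k ω) h
  calc ∫ ω, spacingCount n m (fun i k => T i k ω) h ∂P
      ≤ ∫ ω, ∑ i, ∑ q ∈ univ.offDiag, (E i q).indicator 1 ω ∂P := by
        refine integral_mono (integrable_spacingCount hT) ?_ hcount
        exact integrable_finsetSum _ fun i _ => integrable_finsetSum _ fun q _ =>
          (integrable_const 1).indicator (hE i q)
    _ = ∑ i, ∑ q ∈ univ.offDiag, P.real (E i q) := by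
        rw [integral_finsetSum _ fun i _ => integrable_finsetSum _ fun q _ =>
          (integrable_const 1).indicator (hE i q)]
        refine sum_congr rfl fun i _ => ?_
        rw [integral_finsetSum _ fun q _ => (integrable_const 1).indicator (hE i q)]
        simp only [integral_indicator_one (hE _ _)]
    _ ≤ ∑ _i : Fin n, ∑ _q ∈ (univ : Finset (Fin m)).offDiag, p :=
        sum_le_sum fun i _ => sum_le_sum fun q hq => hp i q.1 q.2 (mem_offDiag.1 hq).2.2
    _ = n * (m * (m - 1)) * p := by
        simp [offDiag_card, Nat.cast_sub (Nat.le_mul_self m)]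
        ring

end Expectation

/-- for fixed `m ≥ 2` and densities `f` on `(0,1)` bounded between `c_f` and
`C_f`, there are constants `0 < c₁ ≤ c₂` and `h₀ > 0` depending only on `m, c_f, C_f` such
that `c₁ n h ≤ E[Ñ_h] ≤ c₂ n h` for all `n ≥ 1` and `0 < h ≤ h₀`. -/
theorem statement0 (m : ℕ) (hm : 2 ≤ m) (cf Cf : ℝ) (hcf : 0 < cf) (hcC : cf ≤ Cf) :
    ∃ c₁ c₂ h₀ : ℝ, 0 < c₁ ∧ c₁ ≤ c₂ ∧ 0 < h₀ ∧
      ∀ (f : ℝ → ℝ), Measurable f →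
        (∀ x ∈ Set.Ioo (0 : ℝ) 1, cf ≤ f x ∧ f x ≤ Cf) →
        (∀ x, x ∉ Set.Ioo (0 : ℝ) 1 → f x = 0) →
        ∀ (n : ℕ), 1 ≤ n → ∀ (h : ℝ), 0 < h → h ≤ h₀ →
        ∀ (Ω : Type) (_ : MeasurableSpace Ω) (P : Measure Ω), IsProbabilityMeasure P →
        ∀ (T : Fin n → Fin m → Ω → ℝ),
          (∀ i j, Measurable (T i j)) →
          iIndepFun (m := fun _ : Fin n × Fin m => Real.measurableSpace)
            (fun p ω => T p.1 p.2 ω) P →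
          (∀ i j, Measure.map (T i j) P
              = volume.withDensity (fun x => ENNReal.ofReal (f x))) →
          c₁ * n * h ≤ ∫ ω, spacingCount n m (fun i k => T i k ω) h ∂P ∧
            ∫ ω, spacingCount n m (fun i k => T i k ω) h ∂P ≤ c₂ * n * h := by
  refine ⟨cf ^ 2 / 2, max (cf ^ 2 / 2) (2 * Cf * (m * (m - 1))), 1 / 2, by positivity,
    le_max_left _ _, by norm_num, ?_⟩
  intro f _ hfb hf0 n hn h hh hh₀ Ω _ P _ T hT hind hlaw
  set μ := volume.withDensity fun x => ENNReal.ofReal (f x)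
  have : IsProbabilityMeasure μ :=
    hlaw ⟨0, hn⟩ ⟨0, by omega⟩ ▸ Measure.isProbabilityMeasure_map (hT _ _).aemeasurable
  have hpair : ∀ i a b, a ≠ b →
      P.real {ω | |T i a ω - T i b ω| < h} = (μ.prod μ).real (diagStrip h) := fun i a b hab =>
    (hind.indepFun (i := (i, a)) (j := (i, b)) (by simp [hab])).measureReal_abs_sub_lt
      (hT i a) (hT i b) (hlaw i a) (hlaw i b) h
  have hCf : 0 ≤ Cf := hcf.le.trans hcC
  have hfC : ∀ x, f x ≤ Cf := fun x => by
    by_cases hx : x ∈ Set.Ioo (0 : ℝ) 1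
    · exact (hfb x hx).2
    · exact (hf0 x hx).trans_le hCf
  have hlower := le_measureReal_withDensity_prod_diagStrip hcf.le (fun x hx => (hfb x hx).1)
    hh.le hh₀
  have hupper := measureReal_withDensity_prod_diagStrip_le hCf hfC hh.le
  constructor
  · calc cf ^ 2 / 2 * n * h = n * (cf ^ 2 / 2 * h) := by ring
      _ ≤ _ := mul_le_integral_spacingCount hT (a := ⟨0, by omega⟩) (b := ⟨1, by omega⟩)
          (by simp) fun i => hlower.trans_eq (hpair i _ _ (by simp)).symm
  · calc _ ≤ n * (m * (m - 1)) * (2 * Cf * h) :=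
          integral_spacingCount_le hT fun i a b hab => (hpair i a b hab).trans_le hupper
      _ = 2 * Cf * (m * (m - 1)) * n * h := by ring
      _ ≤ _ := by gcongr; exact le_max_right _ _
end

section
/- Let f be a probability density on (0,1) satisfying 0 < c_f ≤ f(t) ≤ C_f for all t ∈ (0,1). There exist constants 0 < c₁ ≤ c₂ < ∞ and δ₀ > 0, depending only on c_f and C_f, such that for every n ≥ 1, every integer m ≥ 2, and every h > 0 with m·h ≤ δ₀, if (t_{i,j}), i = 1,…,n, j = 1,…,m, are i.i.d. with density f and Ñ_h = #{(i,j) : 1 ≤ i ≤ n, 1 ≤ j ≤ m−1, t_{i,(j+1)} − t_{i,(j)} < h}, then c₁·n·m²·h ≤ E[Ñ_h] ≤ c₂·n·m²·h. -/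
/-! For a row of distinct sample points, a spacing of the order statistics is shorter than `h`
exactly when its lower endpoint has another point of the row within distance `h` above it, so
`E[Ñ_h]` is the sum, over all `n m` points `t`, of the probability of this event. A union bound
over the other `m - 1` points gives at most `(m - 1) q`, where `q = P(t' ∈ (t, t + h)) ≤ C_f h`
for independent `t, t'`, and Bonferroni's inequality gives at least `(m - 1) (q - m (C_f h)² / 2)`.
Since `q ≥ c_f² h / 2` and `m h ≤ c_f² / (4 C_f²)`, the correction is at most `q / 4`. -/

open MeasureTheory ProbabilityTheory Filter

open Set
open scoped ENNReal NNReal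

noncomputable def rowSpacingCount {m : ℕ} (v : Fin m → ℝ) (h : ℝ) : ℝ :=
  ∑ j ∈ Finset.range (m - 1), if sortedVal v (j + 1) - sortedVal v j < h then (1 : ℝ) else 0

lemma spacingCount_eq_sum_rowSpacingCount (n m : ℕ) (T : Fin n → Fin m → ℝ) (h : ℝ) :
    spacingCount n m T h = ∑ i, rowSpacingCount (T i) h :=
  rfl

theorem StrictMono.exists_mem_Ioo_castSucc_iff {α : Type*} [LinearOrder α] {m : ℕ}
    {w : Fin (m + 1) → α} (hw : StrictMono w) (j : Fin m) (b : α) :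
    (∃ l, w l ∈ Ioo (w j.castSucc) b) ↔ w j.succ < b := by
  constructor
  · rintro ⟨l, hjl, hlb⟩
    exact (hw.monotone (Fin.castSucc_lt_iff_succ_le.mp (hw.lt_iff_lt.mp hjl))).trans_lt hlb
  · exact fun hb => ⟨j.succ, hw (Fin.castSucc_lt_succ (i := j)), hb⟩

theorem StrictMono.not_exists_mem_Ioi_last {α : Type*} [LinearOrder α] {m : ℕ}
    {w : Fin (m + 1) → α} (hw : StrictMono w) : ¬ ∃ l, w l ∈ Ioi (w (Fin.last m)) :=
  fun ⟨l, hl⟩ => (hw.monotone (Fin.le_last l)).not_gt hl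

lemma StrictMono.sum_exists_mem_Ioo_eq {m : ℕ} {w : Fin (m + 1) → ℝ} (hw : StrictMono w)
    (h : ℝ) :
    ∑ k, (if ∃ l, w l ∈ Ioo (w k) (w k + h) then (1 : ℝ) else 0)
      = ∑ j : Fin m, if w j.succ - w j.castSucc < h then (1 : ℝ) else 0 := by
  rw [Fin.sum_univ_castSucc, if_neg fun ⟨l, hl⟩ => hw.not_exists_mem_Ioi_last ⟨l, hl.1⟩,
    add_zero]
  simp only [hw.exists_mem_Ioo_castSucc_iff, sub_lt_iff_lt_add']

lemma rowSpacingCount_eq_sum_exists_mem_Ioo {m : ℕ} {v : Fin m → ℝ}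
    (hv : Function.Injective v) (h : ℝ) :
    rowSpacingCount v h = ∑ k, if ∃ l, v l ∈ Ioo (v k) (v k + h) then (1 : ℝ) else 0 := by
  cases m with
  | zero => simp [rowSpacingCount]
  | succ m =>
    set σ := Tuple.sort v
    have hw : StrictMono (v ∘ σ) :=
      (Tuple.monotone_sort v).strictMono_of_injective (hv.comp σ.injective)
    have hsorted (j : ℕ) (hj : j < m + 1) : sortedVal v j = v (σ ⟨j, hj⟩) := dif_pos hj
    calc rowSpacingCount v h
        = ∑ j : Fin m, if (v ∘ σ) j.succ - (v ∘ σ) j.castSucc < h then (1 : ℝ) else 0 := by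
          rw [rowSpacingCount, Nat.add_sub_cancel, ← Fin.sum_univ_eq_sum_range]
          refine Finset.sum_congr rfl fun j _ => ?_
          rw [hsorted j (by omega), hsorted (j + 1) (by omega)]
          rfl
      _ = ∑ k, if ∃ l, v l ∈ Ioo (v (σ k)) (v (σ k) + h) then (1 : ℝ) else 0 := by
          rw [← hw.sum_exists_mem_Ioo_eq h]
          exact Finset.sum_congr rfl fun k _ => if_congr
            (σ.surjective.exists (p := fun l => v l ∈ Ioo (v (σ k)) (v (σ k) + h))).symm rfl rfl
      _ = _ := Equiv.sum_comp σ fun k => if ∃ l, v l ∈ Ioo (v k) (v k + h) then 1 else 0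

lemma Finset.card_sub_card_offDiag_div_two_le {α : Type*} [DecidableEq α] (t : Finset α) :
    (t.card : ℝ) - t.offDiag.card / 2 ≤ if t.Nonempty then 1 else 0 := by
  rw [Finset.offDiag_card, Nat.cast_sub (Nat.le_mul_self _), Nat.cast_mul]
  split_ifs with ht
  · -- `r - r (r - 1) / 2 ≤ 1` is `(r - 1) (r - 2) ≥ 0`, which holds at integers `r ≥ 1`.
    have h1 : (1 : ℝ) ≤ t.card := by exact_mod_cast ht.card_pos
    rcases (Nat.one_le_iff_ne_zero.mpr ht.card_ne_zero).eq_or_lt with h | h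
    · rw [← h]; norm_num
    · have h2 : (2 : ℝ) ≤ t.card := by exact_mod_cast h
      nlinarith
  · simp [Finset.not_nonempty_iff_eq_empty.mp ht]

section Bonferroni

variable {Ω : Type*} [MeasurableSpace Ω] {P : Measure Ω} [IsFiniteMeasure P]
  {ι : Type*} [Fintype ι] [DecidableEq ι]

lemma integrable_indicator_one {s : Set Ω} (hs : MeasurableSet s) :
    Integrable (s.indicator (1 : Ω → ℝ)) P :=
  (integrable_const (1 : ℝ)).indicator hs

theorem sum_measureReal_sub_sum_inter_div_two_le_measureReal_iUnion {s : ι → Set Ω}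
    (hs : ∀ i, MeasurableSet (s i)) :
    ∑ i, P.real (s i) - (∑ p ∈ Finset.univ.offDiag, P.real (s p.1 ∩ s p.2)) / 2
      ≤ P.real (⋃ i, s i) := by
  simp only [← integral_indicator_one (hs _), ← integral_indicator_one ((hs _).inter (hs _)),
    ← integral_indicator_one (MeasurableSet.iUnion hs)]
  have hsingles := integrable_finsetSum Finset.univ fun i _ =>
    integrable_indicator_one (P := P) (hs i)
  have hpairs := integrable_finsetSum Finset.univ.offDiag fun p _ =>
    integrable_indicator_one (P := P) ((hs p.1).inter (hs p.2))
  rw [← integral_finsetSum _ fun i _ => integrable_indicator_one (hs i),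
    ← integral_finsetSum _ fun p _ => integrable_indicator_one ((hs p.1).inter (hs p.2)),
    ← integral_div, ← integral_sub hsingles (hpairs.div_const 2)]
  refine integral_mono (hsingles.sub (hpairs.div_const 2))
    (integrable_indicator_one (MeasurableSet.iUnion hs)) fun ω => ?_
  classical
  set t := Finset.univ.filter fun i => ω ∈ s i
  have hsum : ∑ i, (s i).indicator (1 : Ω → ℝ) ω = t.card := by
    simp [Set.indicator_apply, Finset.sum_boole, t]
  have hcard_pairs : ∑ p ∈ Finset.univ.offDiag, (s p.1 ∩ s p.2).indicator (1 : Ω → ℝ) ω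
      = t.offDiag.card := by
    simp only [Set.indicator_apply, Pi.one_apply, Finset.sum_boole, Nat.cast_inj]
    congr 1
    ext p
    simp [t]
    tauto
  have hunion : (⋃ i, s i).indicator (1 : Ω → ℝ) ω = if t.Nonempty then 1 else 0 := by
    simp [Set.indicator_apply, t, Finset.filter_nonempty_iff]
  simpa only [Finset.sum_apply, Pi.sub_apply, Pi.div_apply, hsum, hcard_pairs, hunion]
    using t.card_sub_card_offDiag_div_two_le

end Bonferroni

namespace ProbabilityTheory

variable {Ω : Type*} [MeasurableSpace Ω] {P : Measure Ω} [IsFiniteMeasure P]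

theorem IndepFun.measure_preimage_eq_lintegral {α β : Type*} [MeasurableSpace α]
    [MeasurableSpace β] {X : Ω → α} {Y : Ω → β} (hXY : IndepFun X Y P) (hX : Measurable X)
    (hY : Measurable Y) {S : Set (α × β)} (hS : MeasurableSet S) :
    P ((fun ω => (X ω, Y ω)) ⁻¹' S) = ∫⁻ x, P.map Y (Prod.mk x ⁻¹' S) ∂(P.map X) := by
  rw [← Measure.map_apply (hX.prodMk hY) hS,
    (indepFun_iff_map_prod_eq_prod_map_map hX.aemeasurable hY.aemeasurable).mp hXY,
    Measure.prod_apply hS]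

variable {X Y Z : Ω → ℝ} {μ ν : Measure ℝ}

theorem IndepFun.measure_eq_eq_zero [NullSingletonClass ν] (hXY : IndepFun X Y P)
    (hX : Measurable X) (hY : Measurable Y) (hYν : P.map Y = ν) :
    P {ω | X ω = Y ω} = 0 := by
  have hslice (x : ℝ) : Prod.mk x ⁻¹' {p : ℝ × ℝ | p.1 = p.2} = {x} := by
    ext y; simp [eq_comm]
  rw [show {ω | X ω = Y ω} = (fun ω => (X ω, Y ω)) ⁻¹' {p | p.1 = p.2} from rfl,
    hXY.measure_preimage_eq_lintegral hX hY (measurableSet_eq_fun measurable_fst measurable_snd)]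
  simp [hslice, hYν]

theorem IndepFun.measure_mem_Ioo_eq_lintegral (hXY : IndepFun X Y P) (hX : Measurable X)
    (hY : Measurable Y) (hXμ : P.map X = μ) (hYν : P.map Y = ν) (h : ℝ) :
    P {ω | Y ω ∈ Ioo (X ω) (X ω + h)} = ∫⁻ x, ν (Ioo x (x + h)) ∂μ := by
  rw [← hXμ, ← hYν]
  exact hXY.measure_preimage_eq_lintegral hX hY
    ((measurableSet_lt measurable_fst measurable_snd).inter
      (measurableSet_lt measurable_snd (measurable_fst.add_const h)))

theorem IndepFun.measure_mem_Ioo_inter_mem_Ioo_eq_lintegral [SFinite ν]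
    (hXYZ : IndepFun X (fun ω => (Y ω, Z ω)) P) (hYZ : IndepFun Y Z P) (hX : Measurable X)
    (hY : Measurable Y) (hZ : Measurable Z) (hXμ : P.map X = μ) (hYν : P.map Y = ν)
    (hZν : P.map Z = ν) (h : ℝ) :
    P {ω | Y ω ∈ Ioo (X ω) (X ω + h) ∧ Z ω ∈ Ioo (X ω) (X ω + h)}
      = ∫⁻ x, ν (Ioo x (x + h)) ^ 2 ∂μ := by
  have hYZν : P.map (fun ω => (Y ω, Z ω)) = ν.prod ν := by
    rw [(indepFun_iff_map_prod_eq_prod_map_map hY.aemeasurable hZ.aemeasurable).mp hYZ, hYν, hZν]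
  have hS : MeasurableSet {p : ℝ × ℝ × ℝ |
      p.2.1 ∈ Ioo p.1 (p.1 + h) ∧ p.2.2 ∈ Ioo p.1 (p.1 + h)} := by
    have hfst : Measurable fun p : ℝ × ℝ × ℝ => p.1 := measurable_fst
    exact ((measurableSet_lt hfst measurable_snd.fst).inter
      (measurableSet_lt measurable_snd.fst (hfst.add_const h))).inter
      ((measurableSet_lt hfst measurable_snd.snd).inter
        (measurableSet_lt measurable_snd.snd (hfst.add_const h)))
  rw [show {ω | Y ω ∈ Ioo (X ω) (X ω + h) ∧ Z ω ∈ Ioo (X ω) (X ω + h)}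
      = (fun ω => (X ω, (Y ω, Z ω))) ⁻¹' {p : ℝ × ℝ × ℝ |
        p.2.1 ∈ Ioo p.1 (p.1 + h) ∧ p.2.2 ∈ Ioo p.1 (p.1 + h)} from rfl,
    hXYZ.measure_preimage_eq_lintegral hX (hY.prodMk hZ) hS, hXμ, hYZν]
  refine lintegral_congr fun x => ?_
  rw [sq, ← Measure.prod_prod]
  rfl

end ProbabilityTheory

/-- The probability that `Y ∈ (X, X + h)` for independent `X, Y` of law `μ`. -/
noncomputable def nearPairProb (μ : Measure ℝ) (h : ℝ) : ℝ :=
  (∫⁻ x, μ (Ioo x (x + h)) ∂μ).toReal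

lemma nearPairProb_le {μ : Measure ℝ} [IsProbabilityMeasure μ] {h : ℝ} {a : ℝ≥0}
    (ha : ∀ x, μ (Ioo x (x + h)) ≤ a) : nearPairProb μ h ≤ a := by
  refine ENNReal.toReal_le_coe_of_le_coe ?_
  calc ∫⁻ x, μ (Ioo x (x + h)) ∂μ ≤ ∫⁻ _, (a : ℝ≥0∞) ∂μ := lintegral_mono ha
    _ = a := by simp

lemma mul_le_nearPairProb {μ : Measure ℝ} [IsProbabilityMeasure μ] {h a b : ℝ} {s : Set ℝ}
    (hs : MeasurableSet s) (ha : 0 ≤ a) (hwin : ∀ x ∈ s, ENNReal.ofReal a ≤ μ (Ioo x (x + h)))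
    (hμs : ENNReal.ofReal b ≤ μ s) : a * b ≤ nearPairProb μ h := by
  have hfin : ∫⁻ x, μ (Ioo x (x + h)) ∂μ ≠ ⊤ :=
    ne_top_of_le_ne_top (by simp) (lintegral_mono fun _ => prob_le_one (μ := μ))
  refine (ENNReal.ofReal_le_iff_le_toReal hfin).mp ?_
  calc ENNReal.ofReal (a * b) ≤ ENNReal.ofReal a * μ s := by
        rw [ENNReal.ofReal_mul ha]; gcongr
    _ = ∫⁻ x in s, ENNReal.ofReal a ∂μ := (setLIntegral_const _ _).symm
    _ ≤ ∫⁻ x in s, μ (Ioo x (x + h)) ∂μ := setLIntegral_mono' hs hwin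
    _ ≤ ∫⁻ x, μ (Ioo x (x + h)) ∂μ := setLIntegral_le_lintegral _ _

section IIDRow

variable {Ω : Type*} [MeasurableSpace Ω] {P : Measure Ω} [IsFiniteMeasure P] {m : ℕ}
  {X : Fin m → Ω → ℝ} {μ : Measure ℝ}

lemma ae_injective_of_iIndepFun [NullSingletonClass μ] (hX : ∀ k, Measurable (X k))
    (hind : iIndepFun X P) (hlaw : ∀ k, P.map (X k) = μ) :
    ∀ᵐ ω ∂P, Function.Injective fun k => X k ω := by
  refine ae_all_iff.mpr fun k => ae_all_iff.mpr fun l => ?_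
  by_cases hkl : k = l
  · exact ae_of_all _ fun _ _ => hkl
  · filter_upwards [measure_eq_zero_iff_ae_notMem.mp
      ((hind.indepFun hkl).measure_eq_eq_zero (hX k) (hX l) (hlaw l))] with ω hω heq
    exact absurd heq hω

lemma measurableSet_mem_Ioo (hX : ∀ k, Measurable (X k)) (h : ℝ) (k l : Fin m) :
    MeasurableSet {ω | X l ω ∈ Ioo (X k ω) (X k ω + h)} :=
  (measurableSet_lt (hX k) (hX l)).inter (measurableSet_lt (hX l) ((hX k).add_const h))

lemma measurableSet_exists_mem_Ioo (hX : ∀ k, Measurable (X k)) (h : ℝ) (k : Fin m) :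
    MeasurableSet {ω | ∃ l, X l ω ∈ Ioo (X k ω) (X k ω + h)} := by
  simpa only [Set.ofPred_exists] using MeasurableSet.iUnion (measurableSet_mem_Ioo hX h k)

lemma rowSpacingCount_ae_eq_sum_indicator [NullSingletonClass μ] (hX : ∀ k, Measurable (X k))
    (hind : iIndepFun X P) (hlaw : ∀ k, P.map (X k) = μ) (h : ℝ) :
    (fun ω => rowSpacingCount (fun k => X k ω) h)
      =ᵐ[P] fun ω => ∑ k, {ω | ∃ l, X l ω ∈ Ioo (X k ω) (X k ω + h)}.indicator 1 ω := by
  filter_upwards [ae_injective_of_iIndepFun hX hind hlaw] with ω hω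
  rw [rowSpacingCount_eq_sum_exists_mem_Ioo hω]
  simp only [Set.indicator_apply, Pi.one_apply]; rfl

lemma integrable_rowSpacingCount [NullSingletonClass μ] (hX : ∀ k, Measurable (X k))
    (hind : iIndepFun X P) (hlaw : ∀ k, P.map (X k) = μ) (h : ℝ) :
    Integrable (fun ω => rowSpacingCount (fun k => X k ω) h) P :=
  (integrable_finsetSum _ fun k _ => integrable_indicator_one
    (measurableSet_exists_mem_Ioo hX h k)).congr
    (rowSpacingCount_ae_eq_sum_indicator hX hind hlaw h).symm

lemma integral_rowSpacingCount [NullSingletonClass μ] (hX : ∀ k, Measurable (X k))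
    (hind : iIndepFun X P) (hlaw : ∀ k, P.map (X k) = μ) (h : ℝ) :
    ∫ ω, rowSpacingCount (fun k => X k ω) h ∂P
      = ∑ k, P.real {ω | ∃ l, X l ω ∈ Ioo (X k ω) (X k ω + h)} := by
  rw [integral_congr_ae (rowSpacingCount_ae_eq_sum_indicator hX hind hlaw h),
    integral_finsetSum _ fun k _ => integrable_indicator_one
      (measurableSet_exists_mem_Ioo hX h k)]
  exact Finset.sum_congr rfl fun k _ => integral_indicator_one (measurableSet_exists_mem_Ioo hX h k)

lemma sum_measureReal_mem_Ioo (hX : ∀ k, Measurable (X k)) (hind : iIndepFun X P)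
    (hlaw : ∀ k, P.map (X k) = μ) (h : ℝ) (k : Fin m) :
    ∑ l, P.real {ω | X l ω ∈ Ioo (X k ω) (X k ω + h)} = (m - 1) * nearPairProb μ h := by
  have hterm (l : Fin m) : P.real {ω | X l ω ∈ Ioo (X k ω) (X k ω + h)}
      = if l = k then 0 else nearPairProb μ h := by
    split_ifs with hlk
    · subst hlk; simp
    · rw [measureReal_def, (hind.indepFun (Ne.symm hlk)).measure_mem_Ioo_eq_lintegral (hX k)
        (hX l) (hlaw k) (hlaw l)]
      rfl
  rw [Finset.sum_congr rfl fun l _ => hterm l, Finset.sum_ite, Finset.sum_const_zero, zero_add,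
    Finset.sum_const, Finset.filter_ne', Finset.card_erase_of_mem (Finset.mem_univ k),
    Finset.card_univ, Fintype.card_fin, nsmul_eq_mul, Nat.cast_pred (Fin.pos k)]

lemma measureReal_mem_Ioo_inter_mem_Ioo_le [IsProbabilityMeasure μ] (hX : ∀ k, Measurable (X k))
    (hind : iIndepFun X P) (hlaw : ∀ k, P.map (X k) = μ) {h : ℝ} {a : ℝ≥0}
    (ha : ∀ x, μ (Ioo x (x + h)) ≤ a) (k : Fin m) {l l' : Fin m} (hll' : l ≠ l') :
    P.real ({ω | X l ω ∈ Ioo (X k ω) (X k ω + h)} ∩ {ω | X l' ω ∈ Ioo (X k ω) (X k ω + h)})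
      ≤ (a : ℝ) ^ 2 := by
  by_cases hkl : k = l
  · subst hkl; simp
  by_cases hkl' : k = l'
  · subst hkl'; simp
  have hXYZ : IndepFun (X k) (fun ω => (X l ω, X l' ω)) P :=
    (hind.indepFun_prodMk hX l l' k (Ne.symm hkl) (Ne.symm hkl')).symm
  rw [measureReal_def, ← Set.ofPred_and, hXYZ.measure_mem_Ioo_inter_mem_Ioo_eq_lintegral
    (hind.indepFun hll') (hX k) (hX l) (hX l') (hlaw k) (hlaw l) (hlaw l'), ← NNReal.coe_pow]
  refine ENNReal.toReal_le_coe_of_le_coe ?_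
  calc ∫⁻ x, μ (Ioo x (x + h)) ^ 2 ∂μ ≤ ∫⁻ _, (a : ℝ≥0∞) ^ 2 ∂μ :=
        lintegral_mono fun x => pow_le_pow_left' (ha x) 2
    _ = ↑(a ^ 2) := by simp

lemma measureReal_exists_mem_Ioo_le (hX : ∀ k, Measurable (X k)) (hind : iIndepFun X P)
    (hlaw : ∀ k, P.map (X k) = μ) (h : ℝ) (k : Fin m) :
    P.real {ω | ∃ l, X l ω ∈ Ioo (X k ω) (X k ω + h)} ≤ (m - 1) * nearPairProb μ h := by
  rw [Set.ofPred_exists, ← sum_measureReal_mem_Ioo hX hind hlaw h k]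
  exact measureReal_iUnion_fintype_le _

lemma le_measureReal_exists_mem_Ioo [IsProbabilityMeasure μ] (hX : ∀ k, Measurable (X k))
    (hind : iIndepFun X P) (hlaw : ∀ k, P.map (X k) = μ) {h : ℝ} {a : ℝ≥0}
    (ha : ∀ x, μ (Ioo x (x + h)) ≤ a) (k : Fin m) :
    (m - 1) * (nearPairProb μ h - m * a ^ 2 / 2)
      ≤ P.real {ω | ∃ l, X l ω ∈ Ioo (X k ω) (X k ω + h)} := by
  let B (l : Fin m) : Set Ω := {ω | X l ω ∈ Ioo (X k ω) (X k ω + h)}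
  have hsingles : ∑ l, P.real (B l) = (m - 1) * nearPairProb μ h :=
    sum_measureReal_mem_Ioo hX hind hlaw h k
  have hpairs : ∑ p ∈ Finset.univ.offDiag, P.real (B p.1 ∩ B p.2) ≤ m * (m - 1) * (a : ℝ) ^ 2 := by
    refine (Finset.sum_le_card_nsmul _ _ _ fun p hp => measureReal_mem_Ioo_inter_mem_Ioo_le
      hX hind hlaw ha k (Finset.mem_offDiag.mp hp).2.2).trans_eq ?_
    rw [Finset.offDiag_card, Finset.card_univ, Fintype.card_fin, nsmul_eq_mul,
      Nat.cast_sub (Nat.le_mul_self m), Nat.cast_mul]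
    ring
  have hbonf : ∑ l, P.real (B l) - (∑ p ∈ Finset.univ.offDiag, P.real (B p.1 ∩ B p.2)) / 2
      ≤ P.real (⋃ l, B l) :=
    sum_measureReal_sub_sum_inter_div_two_le_measureReal_iUnion (measurableSet_mem_Ioo hX h k)
  rw [Set.ofPred_exists]
  linarith

theorem integral_rowSpacingCount_le [NullSingletonClass μ] (hX : ∀ k, Measurable (X k))
    (hind : iIndepFun X P) (hlaw : ∀ k, P.map (X k) = μ) (h : ℝ) :
    ∫ ω, rowSpacingCount (fun k => X k ω) h ∂P ≤ m * (m - 1) * nearPairProb μ h := by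
  rw [integral_rowSpacingCount hX hind hlaw h]
  refine (Finset.sum_le_card_nsmul _ _ _ fun k _ =>
    measureReal_exists_mem_Ioo_le hX hind hlaw h k).trans_eq ?_
  simp only [Finset.card_univ, Fintype.card_fin, nsmul_eq_mul]
  ring

theorem le_integral_rowSpacingCount [IsProbabilityMeasure μ] [NullSingletonClass μ]
    (hX : ∀ k, Measurable (X k)) (hind : iIndepFun X P) (hlaw : ∀ k, P.map (X k) = μ) {h : ℝ}
    {a : ℝ≥0} (ha : ∀ x, μ (Ioo x (x + h)) ≤ a) :
    m * (m - 1) * (nearPairProb μ h - m * a ^ 2 / 2)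
      ≤ ∫ ω, rowSpacingCount (fun k => X k ω) h ∂P := by
  rw [integral_rowSpacingCount hX hind hlaw h]
  refine le_of_eq_of_le ?_ (Finset.card_nsmul_le_sum _ _ _ fun k _ =>
    le_measureReal_exists_mem_Ioo hX hind hlaw ha k)
  simp only [Finset.card_univ, Fintype.card_fin, nsmul_eq_mul]
  ring

theorem integral_spacingCount_mem_Icc [IsProbabilityMeasure μ] [NullSingletonClass μ] {n : ℕ}
    {T : Fin n → Fin m → Ω → ℝ} (hT : ∀ i k, Measurable (T i k))
    (hind : iIndepFun (fun (p : Fin n × Fin m) ω => T p.1 p.2 ω) P)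
    (hlaw : ∀ i k, P.map (T i k) = μ) {h : ℝ} {a : ℝ≥0} (ha : ∀ x, μ (Ioo x (x + h)) ≤ a) :
    ∫ ω, spacingCount n m (fun i k => T i k ω) h ∂P
      ∈ Icc (n * (m * (m - 1) * (nearPairProb μ h - m * a ^ 2 / 2)))
        (n * (m * (m - 1) * nearPairProb μ h)) := by
  have hrow (i : Fin n) : iIndepFun (T i) P :=
    iIndepFun.precomp (g := Prod.mk i) (Prod.mk_right_injective i) hind
  simp only [spacingCount_eq_sum_rowSpacingCount]
  rw [integral_finsetSum _ fun i _ => integrable_rowSpacingCount (hT i) (hrow i) (hlaw i) h]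
  constructor
  · refine le_of_eq_of_le ?_ (Finset.card_nsmul_le_sum _ _ _ fun i _ =>
      le_integral_rowSpacingCount (hT i) (hrow i) (hlaw i) ha)
    simp
  · refine (Finset.sum_le_card_nsmul _ _ _ fun i _ =>
      integral_rowSpacingCount_le (hT i) (hrow i) (hlaw i) h).trans_eq ?_
    simp

end IIDRow

section Density

variable {α : Type*} [MeasurableSpace α] {ν : Measure α} {f : α → ℝ} {s : Set α}

lemma withDensity_ofReal_apply_le {C : ℝ} (hs : MeasurableSet s) (hf : ∀ x ∈ s, f x ≤ C) :
    ν.withDensity (fun x => ENNReal.ofReal (f x)) s ≤ ENNReal.ofReal C * ν s := by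
  rw [withDensity_apply _ hs, ← setLIntegral_const]
  exact setLIntegral_mono' hs fun x hx => ENNReal.ofReal_le_ofReal (hf x hx)

lemma le_withDensity_ofReal_apply {c : ℝ} (hs : MeasurableSet s) (hf : ∀ x ∈ s, c ≤ f x) :
    ENNReal.ofReal c * ν s ≤ ν.withDensity (fun x => ENNReal.ofReal (f x)) s := by
  rw [withDensity_apply _ hs, ← setLIntegral_const]
  exact setLIntegral_mono' hs fun x hx => ENNReal.ofReal_le_ofReal (hf x hx)

end Density

section RealDensity

variable {f : ℝ → ℝ} {c C h : ℝ}

lemma withDensity_ofReal_Ioo_le (hC : 0 ≤ C) (hf : ∀ x, f x ≤ C) (x : ℝ) :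
    volume.withDensity (fun x => ENNReal.ofReal (f x)) (Ioo x (x + h))
      ≤ ENNReal.ofReal (C * h) := by
  refine (withDensity_ofReal_apply_le measurableSet_Ioo fun y _ => hf y).trans_eq ?_
  rw [Real.volume_Ioo, add_sub_cancel_left, ENNReal.ofReal_mul hC]

lemma le_nearPairProb_withDensity
    [IsProbabilityMeasure (volume.withDensity fun x => ENNReal.ofReal (f x))] (hc : 0 ≤ c)
    (hf : ∀ x ∈ Ioo (0 : ℝ) 1, c ≤ f x) (hh : 0 ≤ h) (hh2 : h ≤ 1 / 2) :
    c ^ 2 * h / 2 ≤ nearPairProb (volume.withDensity fun x => ENNReal.ofReal (f x)) h := by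
  have hwin (x : ℝ) (hx : x ∈ Ioo (0 : ℝ) (1 / 2)) : ENNReal.ofReal (c * h)
      ≤ volume.withDensity (fun x => ENNReal.ofReal (f x)) (Ioo x (x + h)) := by
    refine le_of_eq_of_le ?_ (le_withDensity_ofReal_apply measurableSet_Ioo fun y hy =>
      hf y ⟨hx.1.trans hy.1, by linarith [hx.2, hy.2]⟩)
    rw [Real.volume_Ioo, add_sub_cancel_left, ENNReal.ofReal_mul hc]
  have hhalf : ENNReal.ofReal (c * (1 / 2))
      ≤ volume.withDensity (fun x => ENNReal.ofReal (f x)) (Ioo (0 : ℝ) (1 / 2)) := by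
    refine le_of_eq_of_le ?_ (le_withDensity_ofReal_apply measurableSet_Ioo fun y hy =>
      hf y ⟨hy.1, by linarith [hy.2]⟩)
    rw [Real.volume_Ioo, sub_zero, ENNReal.ofReal_mul hc]
  calc c ^ 2 * h / 2 = c * h * (c * (1 / 2)) := by ring
    _ ≤ _ := mul_le_nearPairProb measurableSet_Ioo (by positivity) hwin hhalf

end RealDensity

lemma sq_mul_le_bonferroni_bound {c C q m h : ℝ} (hC : 0 < C) (hm : 2 ≤ m) (hh : 0 < h)
    (hmh : m * h ≤ c ^ 2 / (4 * C ^ 2)) (hq : c ^ 2 * h / 2 ≤ q) :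
    c ^ 2 / 8 * m ^ 2 * h ≤ m * (m - 1) * (q - m * (C * h) ^ 2 / 2) := by
  rw [le_div_iff₀ (by positivity)] at hmh
  have hgap : 3 * c ^ 2 * h / 8 ≤ q - m * (C * h) ^ 2 / 2 := by nlinarith
  have hm_sq : m ^ 2 / 2 ≤ m * (m - 1) := by nlinarith
  calc c ^ 2 / 8 * m ^ 2 * h ≤ m ^ 2 / 2 * (3 * c ^ 2 * h / 8) := by
        nlinarith [mul_nonneg (mul_nonneg (sq_nonneg c) (sq_nonneg m)) hh.le]
    _ ≤ m * (m - 1) * (q - m * (C * h) ^ 2 / 2) := by gcongr; nlinarith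

/-- there are constants `0 < c₁ ≤ c₂` and `δ₀ > 0` depending only on
`c_f, C_f` such that for every `n ≥ 1`, `m ≥ 2` and `h > 0` with `m·h ≤ δ₀`,
`c₁·n·m²·h ≤ E[Ñ_h] ≤ c₂·n·m²·h`. -/
theorem statement1 (cf Cf : ℝ) (hcf : 0 < cf) (hcC : cf ≤ Cf) :
    ∃ c₁ c₂ δ₀ : ℝ, 0 < c₁ ∧ c₁ ≤ c₂ ∧ 0 < δ₀ ∧
      ∀ (f : ℝ → ℝ), Measurable f →
        (∀ x ∈ Set.Ioo (0 : ℝ) 1, cf ≤ f x ∧ f x ≤ Cf) →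
        (∀ x, x ∉ Set.Ioo (0 : ℝ) 1 → f x = 0) →
        ∀ (n : ℕ), 1 ≤ n → ∀ (m : ℕ), 2 ≤ m → ∀ (h : ℝ), 0 < h → (m : ℝ) * h ≤ δ₀ →
        ∀ (Ω : Type) (_ : MeasurableSpace Ω) (P : Measure Ω), IsProbabilityMeasure P →
        ∀ (T : Fin n → Fin m → Ω → ℝ),
          (∀ i j, Measurable (T i j)) →
          iIndepFun
            (fun (p : Fin n × Fin m) ω => T p.1 p.2 ω) P →
          (∀ i j, Measure.map (T i j) P
              = volume.withDensity (fun x => ENNReal.ofReal (f x))) →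
          c₁ * n * m ^ 2 * h ≤ ∫ ω, spacingCount n m (fun i k => T i k ω) h ∂P ∧
            ∫ ω, spacingCount n m (fun i k => T i k ω) h ∂P ≤ c₂ * n * m ^ 2 * h := by
  have hCf : 0 < Cf := hcf.trans_le hcC
  refine ⟨min (cf ^ 2 / 8) Cf, Cf, min (1 / 2) (cf ^ 2 / (4 * Cf ^ 2)), by positivity,
    min_le_right _ _, by positivity, ?_⟩
  intro f _ hfb hf0 n _ m hm h hh hmh Ω _ P _ T hT hind hlaw
  set μ := volume.withDensity fun x => ENNReal.ofReal (f x)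
  have : IsProbabilityMeasure μ :=
    hlaw ⟨0, by omega⟩ ⟨0, by omega⟩ ▸ Measure.isProbabilityMeasure_map (hT _ _).aemeasurable
  set a : ℝ≥0 := (Cf * h).toNNReal
  have ha_coe : (a : ℝ) = Cf * h := Real.coe_toNNReal _ (by positivity)
  have ha : ∀ x, μ (Ioo x (x + h)) ≤ a := withDensity_ofReal_Ioo_le hCf.le fun x => by
    by_cases hx : x ∈ Ioo (0 : ℝ) 1
    exacts [(hfb x hx).2, (hf0 x hx).trans_le hCf.le]
  have hq_le : nearPairProb μ h ≤ Cf * h := ha_coe ▸ nearPairProb_le ha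
  have hm2 : (2 : ℝ) ≤ m := by exact_mod_cast hm
  have hq_ge : cf ^ 2 * h / 2 ≤ nearPairProb μ h :=
    le_nearPairProb_withDensity hcf.le (fun x hx => (hfb x hx).1) hh.le
      (by nlinarith [hmh.trans (min_le_left _ _)])
  obtain ⟨hlower, hupper⟩ := integral_spacingCount_mem_Icc hT hind hlaw ha
  constructor
  · calc min (cf ^ 2 / 8) Cf * n * m ^ 2 * h ≤ n * (cf ^ 2 / 8 * m ^ 2 * h) := by
          have := min_le_left (cf ^ 2 / 8) Cf
          have : (0 : ℝ) ≤ n * m ^ 2 * h := by positivity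
          nlinarith
      _ ≤ n * (m * (m - 1) * (nearPairProb μ h - m * a ^ 2 / 2)) := by
          rw [ha_coe]
          exact mul_le_mul_of_nonneg_left (sq_mul_le_bonferroni_bound hCf hm2 hh
            (hmh.trans (min_le_right _ _)) hq_ge) n.cast_nonneg
      _ ≤ _ := hlower
  · refine hupper.trans ?_
    calc n * (m * (m - 1) * nearPairProb μ h) ≤ n * (m * m * (Cf * h)) := by
          gcongr
          · exact ENNReal.toReal_nonneg
          · linarith
      _ = Cf * n * m ^ 2 * h := by ring
end
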